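/- arXiv:2411.13442 — 2 statements merged into one kernel-verified Lean document; each statement's English description precedes it below -/
import Mathlib

section
/- Let p, q > 1 be real numbers and let x ∈ [1,∞). Then (p/q) ∫_1^x (u^p-1)^{1/q-1} u^{p-2} du = x^{-1} (x^p-1)^{1/q} · ∑_{k=0}^∞ [(1)_k (1/p)_k / ((1+1/q)_k · k!)] (1-x^{-p})^k. (This is the hypergeometric representation arccosh_{p,q}(x) = x^{-1}(x^p-1)^{1/q} · ₂F₁(1, 1/p; 1+1/q; 1-x^{-p}).) -/
open MeasureTheory Filter Set

/-- Ascending Pochhammer symbol `(a)_k = a (a+1) ⋯ (a+k-1)`. -/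
noncomputable def poch (a : ℝ) (k : ℕ) : ℝ := ∏ i ∈ Finset.range k, (a + i)

lemma poch_succ (a : ℝ) (k : ℕ) : poch a (k+1) = poch a k * (a + k) :=
  Finset.prod_range_succ _ _

lemma poch_pos {a : ℝ} (ha : 0 < a) (k : ℕ) : 0 < poch a k :=
  Finset.prod_pos fun i _ => by positivity

lemma poch_one (k : ℕ) : poch 1 k = Nat.factorial k := by
  induction k with
  | zero => simp [poch]
  | succ n ih => rw [poch_succ, ih, Nat.factorial_succ]; push_cast; ring

noncomputable def Apq (p q : ℝ) (k : ℕ) : ℝ := poch (1/p) k / poch (1+1/q) k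

lemma Apq_pos {p q : ℝ} (hp : 1 < p) (hq : 1 < q) (k : ℕ) : 0 < Apq p q k :=
  div_pos (poch_pos (by positivity) k) (poch_pos (by positivity) k)

lemma Apq_le_one {p q : ℝ} (hp : 1 < p) (hq : 1 < q) (k : ℕ) : Apq p q k ≤ 1 := by
  rw [Apq, poch, poch, ← Finset.prod_div_distrib]
  apply Finset.prod_le_one
  · intro i _
    positivity
  · intro i _
    rw [div_le_one (by positivity)]
    have h1 : 1/p ≤ 1 := by
      rw [div_le_one (by linarith)]; linarith
    have h2 : (0:ℝ) < 1/q := by positivity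
    linarith

lemma Apq_rec {p q : ℝ} (hp : 1 < p) (hq : 1 < q) (k : ℕ) :
    Apq p q (k+1) * (p*(k+1) + p/q) = Apq p q k * (p*k+1) := by
  have hq0 : q ≠ 0 := by positivity
  have hp0 : p ≠ 0 := by positivity
  rw [Apq, Apq, poch_succ, poch_succ]
  set P := poch (1/p) k
  set Q := poch (1+1/q) k with hQ
  have h1 : Q ≠ 0 := (poch_pos (show (0:ℝ) < 1+1/q by positivity) k).ne'
  have h2 : (1:ℝ) + 1/q + k ≠ 0 := by positivity
  field_simp
  ring

noncomputable def Gfun (p q : ℝ) (k : ℕ) (u : ℝ) : ℝ :=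
  (u^p - 1)^((k:ℝ) + 1/q) * u^(-(p*(k:ℝ)) - 1)
noncomputable def Gder (p q : ℝ) (k : ℕ) (u : ℝ) : ℝ :=
  (u^p - 1)^((k:ℝ) + 1/q - 1) * u^(-(p*(k:ℝ)) - 2) * ((p/q - 1)*u^p + (p*(k:ℝ)+1))
noncomputable def phi (p q : ℝ) (u : ℝ) : ℝ := (u^p - 1)^(1/q - 1) * u^(p - 2)

lemma Gder_eq (p q : ℝ) (hp : 1 < p) (hq : 1 < q) {u : ℝ} (hu : 1 < u) (k : ℕ) :
    Gder p q k u = phi p q u *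
      ((1 - (u^p)⁻¹)^k * ((p*(k:ℝ) + p/q) - (p*(k:ℝ)+1)*(1 - (u^p)⁻¹))) := by
  have hu0 : 0 < u := by linarith
  have hup1 : 1 < u^p := by
    rw [show (1:ℝ) = u ^ (0:ℝ) by simp]
    exact Real.rpow_lt_rpow_of_exponent_lt hu (by linarith)
  have h1 : 0 < u^p - 1 := by linarith
  have e1 : (u^p-1)^((k:ℝ)+1/q-1) = (u^p-1)^(k:ℕ) * (u^p-1)^(1/q-1) := by
    rw [show (k:ℝ)+1/q-1 = (k:ℝ)+(1/q-1) by ring, Real.rpow_add h1, Real.rpow_natCast]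
  have e2 : u^(-(p*(k:ℝ))-2) = ((u^p)⁻¹)^(k:ℕ) * u^(p-2) * (u^p)⁻¹ := by
    rw [show -(p*(k:ℝ))-2 = (-p)*(k:ℝ) + ((p-2) + -p) by ring, Real.rpow_add hu0,
      Real.rpow_add hu0, Real.rpow_mul hu0.le, Real.rpow_natCast, Real.rpow_neg hu0.le]
    ring
  have hv : u^p * (u^p)⁻¹ = 1 := mul_inv_cancel₀ (by positivity)
  have hpow : (u^p-1)^(k:ℕ) * ((u^p)⁻¹)^(k:ℕ) = (1 - (u^p)⁻¹)^(k:ℕ) := by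
    rw [← mul_pow]; congr 1; linear_combination hv
  simp only [Gder, phi]
  rw [e1, e2]
  linear_combination ((u^p-1)^(1/q-1) * u^(p-2) * (u^p)⁻¹ * ((p/q-1)*u^p + (p*(k:ℝ)+1))) * hpow
    + ((u^p-1)^(1/q-1) * u^(p-2) * (1-(u^p)⁻¹)^(k:ℕ) * (p/q-1)) * hv

lemma Gfun_hasDeriv (p q : ℝ) (hp : 1 < p) (hq : 1 < q) (k : ℕ) {u : ℝ} (hu : 1 < u) :
    HasDerivAt (Gfun p q k) (Gder p q k u) u := by
  have hu0 : 0 < u := by linarith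
  have hup1 : 1 < u^p := by
    rw [show (1:ℝ) = u ^ (0:ℝ) by simp]
    exact Real.rpow_lt_rpow_of_exponent_lt hu (by linarith)
  have h1 : 0 < u^p - 1 := by linarith
  have d1 : HasDerivAt (fun v : ℝ => v^p - 1) (p * u^(p-1)) u :=
    (Real.hasDerivAt_rpow_const (Or.inl hu0.ne')).sub_const 1
  have d2 := d1.rpow_const (p := (k:ℝ)+1/q) (Or.inl h1.ne')
  have d3 : HasDerivAt (fun v : ℝ => v^(-(p*(k:ℝ))-1)) ((-(p*(k:ℝ))-1) * u^(-(p*(k:ℝ))-1-1)) u :=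
    Real.hasDerivAt_rpow_const (Or.inl hu0.ne')
  have hmul := d2.mul d3
  have f1 : (u^p-1)^((k:ℝ)+1/q) = (u^p-1)^((k:ℝ)+1/q-1) * (u^p-1) := by
    nth_rewrite 1 [show (k:ℝ)+1/q = ((k:ℝ)+1/q-1)+1 by ring]
    rw [Real.rpow_add h1, Real.rpow_one]
  have f2 : u^(p-1) * u^(-(p*(k:ℝ))-1) = u^p * u^(-(p*(k:ℝ))-2) := by
    rw [← Real.rpow_add hu0, ← Real.rpow_add hu0]
    congr 1; ring
  have f3 : u^(-(p*(k:ℝ))-1-1) = u^(-(p*(k:ℝ))-2) := by congr 1; ring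
  have key : (p * u^(p-1) * ((k:ℝ)+1/q) * (u^p-1)^((k:ℝ)+1/q-1) * u^(-(p*(k:ℝ))-1)) +
      ((u^p-1)^((k:ℝ)+1/q) * ((-(p*(k:ℝ))-1) * u^(-(p*(k:ℝ))-1-1))) = Gder p q k u := by
    rw [f1, f3,
      show (p * u^(p-1) * ((k:ℝ)+1/q) * (u^p-1)^((k:ℝ)+1/q-1) * u^(-(p*(k:ℝ))-1)) =
        ((k:ℝ)+1/q)*p*(u^p-1)^((k:ℝ)+1/q-1) * (u^(p-1) * u^(-(p*(k:ℝ))-1)) by ring, f2]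
    simp only [Gder]
    have hq0 : q ≠ 0 := by positivity
    field_simp
    ring
  rw [← key]
  exact hmul

lemma hasSum_B (p q : ℝ) (hp : 1 < p) (hq : 1 < q) {s : ℝ} (hs0 : 0 ≤ s) (hs1 : s < 1) :
    HasSum (fun k : ℕ => Apq p q k * (s^k * ((p*(k:ℝ) + p/q) - (p*(k:ℝ)+1)*s))) (p/q) := by
  have hp0 : (0:ℝ) < p := by linarith
  have hq0 : (0:ℝ) < q := by linarith
  set B : ℕ → ℝ := fun k => Apq p q k * (p*(k:ℝ) + p/q) * s^k with hB
  have hterm : ∀ k:ℕ, Apq p q k * (s^k * ((p*(k:ℝ) + p/q) - (p*(k:ℝ)+1)*s)) = B k - B (k+1) := by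
    intro k
    have hrec := Apq_rec hp hq k
    push_cast at hrec
    simp only [hB]
    push_cast
    rw [pow_succ]
    linear_combination (s^k * s) * hrec
  have hA1 := Apq_le_one hp hq
  have hA0 := Apq_pos hp hq
  have hC : Summable (fun k:ℕ => ((p*(k:ℝ) + p/q) + (p*(k:ℝ)+1)) * s^k) := by
    have h1 : Summable (fun k:ℕ => (k:ℝ) * s^k) := by
      simpa using summable_pow_mul_geometric_of_norm_lt_one 1
        (r := s) (by rwa [Real.norm_eq_abs, abs_of_nonneg hs0])
    have h2 : Summable (fun k:ℕ => s^k) := summable_geometric_of_lt_one hs0 hs1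
    exact ((h1.mul_left (2*p)).add (h2.mul_left (p/q+1))).congr fun k => by ring
  have hBb : ∀ k:ℕ, ‖B k‖ ≤ ((p*(k:ℝ) + p/q) + (p*(k:ℝ)+1)) * s^k := by
    intro k
    have h0 : (0:ℝ) ≤ p*(k:ℝ) + p/q := by positivity
    have hsk : (0:ℝ) ≤ s^k := pow_nonneg hs0 k
    have hnn : 0 ≤ B k := mul_nonneg (mul_nonneg (hA0 k).le h0) hsk
    rw [Real.norm_eq_abs, abs_of_nonneg hnn, hB]
    have := hA1 k
    have h2 : Apq p q k * (p*(k:ℝ) + p/q) ≤ (p*(k:ℝ) + p/q) + (p*(k:ℝ)+1) := by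
      nlinarith [hA0 k]
    exact mul_le_mul_of_nonneg_right h2 hsk
  have hBsum : Summable B := Summable.of_norm_bounded hC hBb
  have hB0 : Tendsto B atTop (nhds 0) := squeeze_zero_norm hBb hC.tendsto_atTop_zero
  have hsum : Summable (fun k => B k - B (k+1)) :=
    hBsum.sub ((summable_nat_add_iff 1).mpr hBsum)
  have h1 := hsum.hasSum
  have h2 := h1.tendsto_sum_nat
  have h3 : Tendsto (fun n => ∑ i ∈ Finset.range n, (B i - B (i+1))) atTop (nhds (B 0)) := by
    simp only [Finset.sum_range_sub' B]
    simpa using tendsto_const_nhds.sub hB0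
  have h4 : (∑' k, (B k - B (k+1))) = B 0 := tendsto_nhds_unique h2 h3
  have hB0v : B 0 = p/q := by
    simp [hB, Apq, poch]
  rw [h4, hB0v] at h1
  simpa only [hterm] using h1

lemma phi_nonneg' (p q : ℝ) (hp : 1 < p) {u : ℝ} (hu : 1 ≤ u) : 0 ≤ phi p q u := by
  have h1 : (1:ℝ) ≤ u^p := Real.one_le_rpow hu (by linarith)
  exact mul_nonneg (Real.rpow_nonneg (by linarith) _) (Real.rpow_nonneg (by linarith) _)

lemma phi_continuousOn (p q x : ℝ) (hp : 1 < p) : ContinuousOn (phi p q) (Ioc 1 x) := by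
  have h0 : ∀ u ∈ Ioc (1:ℝ) x, u ≠ 0 := fun u hu => by
    have := hu.1; intro h; rw [h] at this; linarith
  have hb : ∀ u ∈ Ioc (1:ℝ) x, u^p - 1 ≠ 0 := fun u hu => by
    have h1 : (1:ℝ) < u^p := by
      rw [show (1:ℝ) = u ^ (0:ℝ) by simp]
      exact Real.rpow_lt_rpow_of_exponent_lt hu.1 (by linarith)
    linarith
  exact (((continuousOn_id.rpow_const fun u hu => Or.inl (h0 u hu)).sub
    continuousOn_const).rpow_const fun u hu => Or.inl (hb u hu)).mul
    (continuousOn_id.rpow_const fun u hu => Or.inl (h0 u hu))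

lemma phi_integrableOn (p q x : ℝ) (hp : 1 < p) (hq : 1 < q) (hx : 1 < x) :
    IntegrableOn (phi p q) (Ioc 1 x) volume := by
  have hq1 : 1/q - 1 ≤ 0 := by
    have : 1/q < 1 := by rw [div_lt_one (by linarith)]; linarith
    linarith
  have hr : (-1:ℝ) < 1/q - 1 := by
    have h : 0 < 1/q := by positivity
    linarith
  have hii : IntervalIntegrable (fun u : ℝ => (u-1)^(1/q-1)) volume 1 x := by
    have h := (intervalIntegral.intervalIntegrable_rpow' (a := 0) (b := x - 1) (r := 1/q - 1)
      hr).comp_sub_right 1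
    rw [show (0:ℝ)+1 = 1 by norm_num, show x-1+1 = x by ring] at h
    exact h
  have hg : IntegrableOn (fun u : ℝ => x^p * (u-1)^(1/q-1)) (Ioc 1 x) volume := by
    have := ((intervalIntegrable_iff_integrableOn_Ioc_of_le hx.le).mp hii)
    exact this.const_mul _
  have hmeas : AEStronglyMeasurable (phi p q) (volume.restrict (Ioc 1 x)) :=
    (phi_continuousOn p q x hp).aestronglyMeasurable measurableSet_Ioc
  refine MeasureTheory.Integrable.mono hg hmeas ?_
  rw [ae_restrict_iff' measurableSet_Ioc]
  apply ae_of_all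
  intro u hu
  have hu1 : 1 < u := hu.1
  have hux : u ≤ x := hu.2
  have h1 : (1:ℝ) < u^p := by
    rw [show (1:ℝ) = u ^ (0:ℝ) by simp]
    exact Real.rpow_lt_rpow_of_exponent_lt hu1 (by linarith)
  have ha : (u^p-1)^(1/q-1) ≤ (u-1)^(1/q-1) := by
    apply Real.rpow_le_rpow_of_nonpos (by linarith) _ hq1
    have : u ≤ u^p := by
      nth_rewrite 1 [show u = u ^ (1:ℝ) by rw [Real.rpow_one]]
      exact Real.rpow_le_rpow_of_exponent_le hu1.le (by linarith)
    linarith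
  have hb : u^(p-2) ≤ x^p := by
    rcases le_or_gt 2 p with h2 | h2
    · calc u^(p-2) ≤ x^(p-2) := Real.rpow_le_rpow (by linarith) hux (by linarith)
        _ ≤ x^p := Real.rpow_le_rpow_of_exponent_le (by linarith) (by linarith)
    · calc u^(p-2) ≤ 1 := Real.rpow_le_one_of_one_le_of_nonpos hu1.le (by linarith)
        _ ≤ x^p := Real.one_le_rpow (by linarith) (by linarith)
  have hphin : 0 ≤ phi p q u := phi_nonneg' p q hp hu1.le
  have hgn : 0 ≤ (u-1)^(1/q-1) := Real.rpow_nonneg (by linarith) _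
  rw [Real.norm_eq_abs, Real.norm_eq_abs, abs_of_nonneg hphin,
    abs_of_nonneg (by positivity : (0:ℝ) ≤ x^p * (u-1)^(1/q-1))]
  calc phi p q u = (u^p-1)^(1/q-1) * u^(p-2) := rfl
    _ ≤ (u-1)^(1/q-1) * x^p := by
        apply mul_le_mul ha hb (Real.rpow_nonneg (by linarith) _) hgn
    _ = x^p * (u-1)^(1/q-1) := by ring

lemma s_mem {p x u : ℝ} (hp : 1 < p) (hu : 1 < u) (hux : u ≤ x) :
    0 ≤ 1 - (u^p)⁻¹ ∧ 1 - (u^p)⁻¹ ≤ 1 - (x^p)⁻¹ ∧ 1 - (x^p)⁻¹ < 1 := by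
  have hu0 : (0:ℝ) < u := by linarith
  have h1 : (1:ℝ) < u^p := by
    rw [show (1:ℝ) = u ^ (0:ℝ) by simp]
    exact Real.rpow_lt_rpow_of_exponent_lt hu (by linarith)
  have h2 : u^p ≤ x^p := Real.rpow_le_rpow hu0.le hux (by linarith)
  have h3 : (0:ℝ) < x^p := by linarith
  have h4 : (x^p)⁻¹ ≤ (u^p)⁻¹ := by
    apply inv_anti₀ (by linarith) h2
  have h5 : (u^p)⁻¹ ≤ 1 := by
    rw [inv_le_one_iff₀]; right; linarith
  have h6 : (0:ℝ) < (x^p)⁻¹ := by positivity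
  exact ⟨by linarith, by linarith, by linarith⟩

lemma Gder_bound (p q x : ℝ) (hp : 1 < p) (hq : 1 < q) {u : ℝ} (hu : 1 < u) (hux : u ≤ x)
    (k : ℕ) :
    ‖Gder p q k u‖ ≤ ((2*p*(k:ℝ) + p/q + 1) * (1 - (x^p)⁻¹)^k) * phi p q u := by
  obtain ⟨hs0, hsle, hsx1⟩ := s_mem hp hu hux
  have hs1 : 1 - (u^p)⁻¹ ≤ 1 := by
    have : (0:ℝ) < (u^p)⁻¹ := by
      have h1 : (1:ℝ) < u^p := by
        rw [show (1:ℝ) = u ^ (0:ℝ) by simp]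
        exact Real.rpow_lt_rpow_of_exponent_lt hu (by linarith)
      positivity
    linarith
  have hphin : 0 ≤ phi p q u := phi_nonneg' p q hp hu.le
  rw [Gder_eq p q hp hq hu k, norm_mul, Real.norm_eq_abs (phi p q u), abs_of_nonneg hphin,
    mul_comm (((2*p*(k:ℝ) + p/q + 1) * (1 - (x^p)⁻¹)^k)) (phi p q u)]
  apply mul_le_mul_of_nonneg_left _ hphin
  rw [norm_mul, Real.norm_eq_abs, Real.norm_eq_abs, abs_pow, abs_of_nonneg hs0]
  have hp0 : (0:ℝ) < p := by linarith
  have hq0 : (0:ℝ) < q := by linarith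
  have hb1 : (1 - (u^p)⁻¹)^k ≤ (1 - (x^p)⁻¹)^k := pow_le_pow_left₀ hs0 hsle k
  have hb2 : |(p*(k:ℝ) + p/q) - (p*(k:ℝ)+1)*(1 - (u^p)⁻¹)| ≤ 2*p*(k:ℝ) + p/q + 1 := by
    rw [abs_le]
    constructor
    · have h1 : (0:ℝ) ≤ p*(k:ℝ) + p/q := by positivity
      have h2 : (p*(k:ℝ)+1)*(1 - (u^p)⁻¹) ≤ (p*(k:ℝ)+1) * 1 := by
        apply mul_le_mul_of_nonneg_left hs1 (by positivity)
      nlinarith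
    · have h2 : (0:ℝ) ≤ (p*(k:ℝ)+1)*(1 - (u^p)⁻¹) := by positivity
      nlinarith
  calc (1 - (u^p)⁻¹)^k * |(p*(k:ℝ) + p/q) - (p*(k:ℝ)+1)*(1 - (u^p)⁻¹)|
      ≤ (1 - (x^p)⁻¹)^k * (2*p*(k:ℝ) + p/q + 1) := by
        apply mul_le_mul hb1 hb2 (abs_nonneg _) (pow_nonneg (by linarith) k)
    _ = (2*p*(k:ℝ) + p/q + 1) * (1 - (x^p)⁻¹)^k := by ring

lemma Gder_continuousOn (p q x : ℝ) (hp : 1 < p) (k : ℕ) :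
    ContinuousOn (Gder p q k) (Ioc 1 x) := by
  have h0 : ∀ u ∈ Ioc (1:ℝ) x, u ≠ 0 := fun u hu => by
    have := hu.1; intro h; rw [h] at this; linarith
  have hb : ∀ u ∈ Ioc (1:ℝ) x, u^p - 1 ≠ 0 := fun u hu => by
    have h1 : (1:ℝ) < u^p := by
      rw [show (1:ℝ) = u ^ (0:ℝ) by simp]
      exact Real.rpow_lt_rpow_of_exponent_lt hu.1 (by linarith)
    linarith
  exact ((((continuousOn_id.rpow_const fun u hu => Or.inl (h0 u hu)).sub
    continuousOn_const).rpow_const fun u hu => Or.inl (hb u hu)).mul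
    (continuousOn_id.rpow_const fun u hu => Or.inl (h0 u hu))).mul
    ((continuousOn_const.mul (continuousOn_id.rpow_const fun u hu => Or.inl (h0 u hu))).add
      continuousOn_const)

lemma Gder_integrableOn (p q x : ℝ) (hp : 1 < p) (hq : 1 < q) (hx : 1 < x) (k : ℕ) :
    IntegrableOn (Gder p q k) (Ioc 1 x) volume := by
  have hmeas : AEStronglyMeasurable (Gder p q k) (volume.restrict (Ioc 1 x)) :=
    (Gder_continuousOn p q x hp k).aestronglyMeasurable measurableSet_Ioc
  have hg : IntegrableOn
      (fun u : ℝ => ((2*p*(k:ℝ) + p/q + 1) * (1 - (x^p)⁻¹)^k) * phi p q u) (Ioc 1 x) volume :=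
    (phi_integrableOn p q x hp hq hx).const_mul _
  refine MeasureTheory.Integrable.mono hg hmeas ?_
  rw [ae_restrict_iff' measurableSet_Ioc]
  apply ae_of_all
  intro u hu
  refine (Gder_bound p q x hp hq hu.1 hu.2 k).trans ?_
  exact le_abs_self _

lemma Gfun_integral (p q x : ℝ) (hp : 1 < p) (hq : 1 < q) (hx : 1 < x) (k : ℕ) :
    ∫ u in Ioc (1:ℝ) x, Gder p q k u = Gfun p q k x := by
  have hcont : ContinuousOn (Gfun p q k) (Icc 1 x) := by
    have h0 : ∀ u ∈ Icc (1:ℝ) x, u ≠ 0 := fun u hu => by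
      have := hu.1; intro h; rw [h] at this; linarith
    have hkq : (0:ℝ) ≤ (k:ℝ) + 1/q := by positivity
    exact (((continuousOn_id.rpow_const fun u hu => Or.inl (h0 u hu)).sub
      continuousOn_const).rpow_const fun u _ => Or.inr hkq).mul
      (continuousOn_id.rpow_const fun u hu => Or.inl (h0 u hu))
  have hderiv : ∀ u ∈ Ioo (1:ℝ) x, HasDerivAt (Gfun p q k) (Gder p q k u) u :=
    fun u hu => Gfun_hasDeriv p q hp hq k hu.1
  have hint : IntervalIntegrable (Gder p q k) volume 1 x :=
    (intervalIntegrable_iff_integrableOn_Ioc_of_le hx.le).mpr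
      (Gder_integrableOn p q x hp hq hx k)
  have h := intervalIntegral.integral_eq_sub_of_hasDerivAt_of_le hx.le hcont hderiv hint
  rw [intervalIntegral.integral_of_le hx.le] at h
  rw [h]
  have hG1 : Gfun p q k 1 = 0 := by
    have : ((k:ℝ) + 1/q) ≠ 0 := by positivity
    rw [Gfun, Real.one_rpow, sub_self, Real.zero_rpow this, zero_mul]
  rw [hG1, sub_zero]

lemma Gfun_eq (p q x : ℝ) (hp : 1 < p) (hq : 1 < q) (hx : 1 < x) (k : ℕ) :
    Gfun p q k x = (x⁻¹ * (x^p-1)^(1/q)) * (1 - x^(-p))^k := by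
  have hx0 : (0:ℝ) < x := by linarith
  have hxp1 : 1 < x^p := by
    rw [show (1:ℝ) = x ^ (0:ℝ) by simp]
    exact Real.rpow_lt_rpow_of_exponent_lt hx (by linarith)
  have h1 : 0 < x^p - 1 := by linarith
  have e1 : (x^p-1)^((k:ℝ)+1/q) = (x^p-1)^(k:ℕ) * (x^p-1)^(1/q) := by
    rw [Real.rpow_add h1, Real.rpow_natCast]
  have e2 : x^(-(p*(k:ℝ))-1) = ((x^p)⁻¹)^(k:ℕ) * x⁻¹ := by
    rw [show -(p*(k:ℝ))-1 = (-p)*(k:ℝ) + (-1) by ring, Real.rpow_add hx0,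
      Real.rpow_mul hx0.le, Real.rpow_natCast, Real.rpow_neg hx0.le, Real.rpow_neg_one]
  have hv : x^p * (x^p)⁻¹ = 1 := mul_inv_cancel₀ (by positivity)
  have hrp : x^(-p) = (x^p)⁻¹ := Real.rpow_neg hx0.le p
  have hpow : (x^p-1)^(k:ℕ) * ((x^p)⁻¹)^(k:ℕ) = (1 - (x^p)⁻¹)^(k:ℕ) := by
    rw [← mul_pow]; congr 1; linear_combination hv
  rw [Gfun, e1, e2, hrp]
  linear_combination ((x^p-1)^(1/q) * x⁻¹) * hpow

theorem arccosh_pq_hypergeometric (p q x : ℝ) (hp : 1 < p) (hq : 1 < q)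
    (hx : x ∈ Set.Ici (1:ℝ)) :
    (p / q) * ∫ u in (1:ℝ)..x, (u ^ p - 1) ^ (1 / q - 1) * u ^ (p - 2) =
      x⁻¹ * (x ^ p - 1) ^ (1 / q) *
        ∑' k : ℕ, poch 1 k * poch (1 / p) k /
          (poch (1 + 1 / q) k * (Nat.factorial k : ℝ)) * (1 - x ^ (-p)) ^ k := by
  have hq0 : (0:ℝ) < q := by linarith
  have hp0 : (0:ℝ) < p := by linarith
  rw [Set.mem_Ici] at hx
  rcases eq_or_lt_of_le hx with h1 | hx1
  · rw [← h1]
    rw [intervalIntegral.integral_same, mul_zero, Real.one_rpow, sub_self,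
      Real.zero_rpow (one_div_ne_zero (by linarith)), mul_zero, zero_mul]
  · have hx0 : (0:ℝ) < x := by linarith
    have hfac : ∀ k:ℕ, poch 1 k * poch (1/p) k /
        (poch (1+1/q) k * (Nat.factorial k : ℝ)) * (1 - x^(-p))^k
        = Apq p q k * (1 - x^(-p))^k := by
      intro k
      have h1 : (Nat.factorial k : ℝ) ≠ 0 := Nat.cast_ne_zero.mpr (Nat.factorial_ne_zero k)
      rw [poch_one, mul_comm (poch (1+1/q) k) ((Nat.factorial k : ℝ)),
        mul_div_mul_left _ _ h1, Apq]
    rw [tsum_congr hfac, ← tsum_mul_left]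
    have hG : ∀ k:ℕ, x⁻¹ * (x^p-1)^(1/q) * (Apq p q k * (1 - x^(-p))^k)
        = Apq p q k * Gfun p q k x := by
      intro k; rw [Gfun_eq p q x hp hq hx1]; ring
    rw [tsum_congr hG]
    have hInt : ∀ k:ℕ, Apq p q k * Gfun p q k x
        = ∫ u in Ioc (1:ℝ) x, Apq p q k * Gder p q k u := by
      intro k
      rw [MeasureTheory.integral_const_mul, Gfun_integral p q x hp hq hx1 k]
    rw [tsum_congr hInt]
    have hF_int : ∀ k:ℕ, Integrable (fun u => Apq p q k * Gder p q k u)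
        (volume.restrict (Ioc 1 x)) :=
      fun k => (Gder_integrableOn p q x hp hq hx1 k).const_mul _
    obtain ⟨hsx0, -, hsx1⟩ := s_mem hp hx1 (le_refl x)
    have hM : Summable (fun k:ℕ =>
        ((2*p*(k:ℝ) + p/q + 1) * (1 - (x^p)⁻¹)^k) * (∫ u in Ioc (1:ℝ) x, phi p q u)) := by
      have h1 : Summable (fun k:ℕ => (k:ℝ) * (1 - (x^p)⁻¹)^k) := by
        simpa using summable_pow_mul_geometric_of_norm_lt_one 1
          (r := 1 - (x^p)⁻¹) (by rwa [Real.norm_eq_abs, abs_of_nonneg hsx0])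
      have h2 : Summable (fun k:ℕ => (1 - (x^p)⁻¹)^k) := summable_geometric_of_lt_one hsx0 hsx1
      exact (((h1.mul_left (2*p)).add (h2.mul_left (p/q+1))).congr
        (fun k => by ring)).mul_right _
    have hF_sum : Summable (fun k:ℕ => ∫ u in Ioc (1:ℝ) x, ‖Apq p q k * Gder p q k u‖) := by
      refine Summable.of_nonneg_of_le (fun k => integral_nonneg (fun u => norm_nonneg _)) ?_ hM
      intro k
      have hb : ∀ u ∈ Ioc (1:ℝ) x, ‖Apq p q k * Gder p q k u‖
          ≤ ((2*p*(k:ℝ) + p/q + 1) * (1 - (x^p)⁻¹)^k) * phi p q u := by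
        intro u hu
        rw [norm_mul]
        calc ‖Apq p q k‖ * ‖Gder p q k u‖
            ≤ 1 * (((2*p*(k:ℝ) + p/q + 1) * (1 - (x^p)⁻¹)^k) * phi p q u) := by
              apply mul_le_mul _ (Gder_bound p q x hp hq hu.1 hu.2 k) (norm_nonneg _) one_pos.le
              rw [Real.norm_eq_abs, abs_of_nonneg (Apq_pos hp hq k).le]
              exact Apq_le_one hp hq k
          _ = _ := one_mul _
      calc ∫ u in Ioc (1:ℝ) x, ‖Apq p q k * Gder p q k u‖
          ≤ ∫ u in Ioc (1:ℝ) x, ((2*p*(k:ℝ) + p/q + 1) * (1 - (x^p)⁻¹)^k) * phi p q u :=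
            setIntegral_mono_on ((hF_int k).norm)
              ((phi_integrableOn p q x hp hq hx1).const_mul _) measurableSet_Ioc hb
        _ = ((2*p*(k:ℝ) + p/q + 1) * (1 - (x^p)⁻¹)^k) * ∫ u in Ioc (1:ℝ) x, phi p q u :=
            MeasureTheory.integral_const_mul _ _
    rw [MeasureTheory.integral_tsum_of_summable_integral_norm hF_int hF_sum]
    have hpt : Set.EqOn (fun u => ∑' k:ℕ, Apq p q k * Gder p q k u)
        (fun u => (p/q) * phi p q u) (Ioc 1 x) := by
      intro u hu
      have hu1 : (1:ℝ) < u := hu.1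
      obtain ⟨ha, hble, -⟩ := s_mem hp hu1 hu.2
      have hsu1 : 1 - (u^p)⁻¹ < 1 := by
        have h1 : (1:ℝ) < u^p := by
          rw [show (1:ℝ) = u ^ (0:ℝ) by simp]
          exact Real.rpow_lt_rpow_of_exponent_lt hu1 (by linarith)
        have : (0:ℝ) < (u^p)⁻¹ := by positivity
        linarith
      have h := (hasSum_B p q hp hq ha hsu1).mul_left (phi p q u)
      have heq : ∀ k:ℕ, phi p q u * (Apq p q k * ((1-(u^p)⁻¹)^k *
          ((p*(k:ℝ)+p/q) - (p*(k:ℝ)+1)*(1-(u^p)⁻¹)))) = Apq p q k * Gder p q k u := by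
        intro k; rw [Gder_eq p q hp hq hu1 k]; ring
      have h2 : HasSum (fun k:ℕ => Apq p q k * Gder p q k u) (phi p q u * (p/q)) := by
        simpa only [heq] using h
      simp only
      rw [h2.tsum_eq]
      ring
    rw [setIntegral_congr_fun measurableSet_Ioc hpt, MeasureTheory.integral_const_mul,
      ← intervalIntegral.integral_of_le hx1.le]
    rfl
end

section
/- Fix p > 1 and y > 0. If 1 < q₁ < q₂ and x₁, x₂ ∈ (0,1) satisfy ∫_0^{x₁} (1-t^{q₁})^{-1/p} dt = y and ∫_0^{x₂} (1-t^{q₂})^{-1/p} dt = y, then x₁ < x₂. In other words, the function q ↦ sin_{p,q}(y) is increasing on (1,∞). -/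
/-!
Write `f_q t = (1 - t ^ q) ^ (-1/p)` and suppose `x₂ ≤ x₁`. Raising `q` lowers `t ^ q` on `(0, 1)`
and hence strictly lowers `f_q`, so `y = ∫₀^{x₂} f_{q₂} ≤ ∫₀^{x₁} f_{q₂} < ∫₀^{x₁} f_{q₁} = y`,
the first step because `f_{q₂} ≥ 0`.
-/

open MeasureTheory Set

section OneSubRpow

variable {q s : ℝ}

lemma one_sub_rpow_pos {t : ℝ} (hq : 0 < q) (ht₀ : 0 ≤ t) (ht₁ : t < 1) : 0 < 1 - t ^ q :=
  sub_pos.mpr (Real.rpow_lt_one ht₀ ht₁ hq)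

lemma continuousOn_one_sub_rpow_rpow {b : ℝ} (hq : 0 < q) (hb : b < 1) :
    ContinuousOn (fun t : ℝ => (1 - t ^ q) ^ s) (Icc 0 b) :=
  (continuousOn_const.sub (continuousOn_id.rpow_const fun _ _ => Or.inr hq.le)).rpow_const
    fun _ ht => Or.inl (one_sub_rpow_pos hq ht.1 (ht.2.trans_lt hb)).ne'

lemma one_sub_rpow_rpow_lt_of_lt {q₁ q₂ t : ℝ} (hq₁ : 0 < q₁) (hq : q₁ < q₂) (hs : s < 0)
    (ht₀ : 0 < t) (ht₁ : t < 1) : (1 - t ^ q₂) ^ s < (1 - t ^ q₁) ^ s :=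
  Real.rpow_lt_rpow_of_neg (one_sub_rpow_pos hq₁ ht₀.le ht₁)
    (sub_lt_sub_left (Real.rpow_lt_rpow_of_exponent_gt ht₀ ht₁ hq) 1) hs

lemma integral_one_sub_rpow_rpow_mono {x x' : ℝ} (hq : 0 < q) (hx : 0 ≤ x) (hxx' : x ≤ x')
    (hx' : x' < 1) :
    ∫ t in (0 : ℝ)..x, (1 - t ^ q) ^ s ≤ ∫ t in (0 : ℝ)..x', (1 - t ^ q) ^ s := by
  refine intervalIntegral.integral_mono_interval le_rfl hx hxx' ?_
    ((continuousOn_one_sub_rpow_rpow hq hx').intervalIntegrable_of_Icc (hx.trans hxx'))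
  filter_upwards [ae_restrict_mem measurableSet_Ioc] with t ht
  exact Real.rpow_nonneg (one_sub_rpow_pos hq ht.1.le (ht.2.trans_lt hx')).le s

lemma integral_one_sub_rpow_rpow_lt_of_lt {q₁ q₂ x : ℝ} (hq₁ : 0 < q₁) (hq : q₁ < q₂)
    (hs : s < 0) (hx₀ : 0 < x) (hx₁ : x < 1) :
    ∫ t in (0 : ℝ)..x, (1 - t ^ q₂) ^ s < ∫ t in (0 : ℝ)..x, (1 - t ^ q₁) ^ s :=
  intervalIntegral.integral_lt_integral_of_continuousOn_of_le_of_exists_lt hx₀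
    (continuousOn_one_sub_rpow_rpow (hq₁.trans hq) hx₁) (continuousOn_one_sub_rpow_rpow hq₁ hx₁)
    (fun _ ht => (one_sub_rpow_rpow_lt_of_lt hq₁ hq hs ht.1 (ht.2.trans_lt hx₁)).le)
    ⟨x, right_mem_Icc.mpr hx₀.le, one_sub_rpow_rpow_lt_of_lt hq₁ hq hs hx₀ hx₁⟩

end OneSubRpow

theorem sin_pq_increasing_in_q_general (p y : ℝ) (hp : 1 < p)
    (q₁ q₂ x₁ x₂ : ℝ) (hq₁ : 1 < q₁) (hq : q₁ < q₂)
    (hx₁ : x₁ ∈ Set.Ioo (0:ℝ) 1) (hx₂ : x₂ ∈ Set.Ioo (0:ℝ) 1)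
    (h₁ : (∫ t in (0:ℝ)..x₁, (1 - t ^ q₁) ^ (-(1 / p))) = y)
    (h₂ : (∫ t in (0:ℝ)..x₂, (1 - t ^ q₂) ^ (-(1 / p))) = y) :
    x₁ < x₂ := by
  by_contra! hle
  have hs : -(1 / p) < 0 := neg_neg_of_pos (by positivity)
  have hq₁₀ : (0 : ℝ) < q₁ := zero_lt_one.trans hq₁
  have hmono := integral_one_sub_rpow_rpow_mono (s := -(1 / p)) (hq₁₀.trans hq) hx₂.1.le hle hx₁.2
  have hlt := integral_one_sub_rpow_rpow_lt_of_lt hq₁₀ hq hs hx₁.1 hx₁.2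
  linarith

theorem sin_pq_increasing_in_q (p y : ℝ) (hp : 1 < p) (hy : 0 < y)
    (q₁ q₂ x₁ x₂ : ℝ) (hq₁ : 1 < q₁) (hq : q₁ < q₂)
    (hx₁ : x₁ ∈ Set.Ioo (0:ℝ) 1) (hx₂ : x₂ ∈ Set.Ioo (0:ℝ) 1)
    (h₁ : (∫ t in (0:ℝ)..x₁, (1 - t ^ q₁) ^ (-(1 / p))) = y)
    (h₂ : (∫ t in (0:ℝ)..x₂, (1 - t ^ q₂) ^ (-(1 / p))) = y) :
    x₁ < x₂ :=
  sin_pq_increasing_in_q_general p y hp q₁ q₂ x₁ x₂ hq₁ hq hx₁ hx₂ h₁ h₂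
end
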